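/- For every perfect matching M of the Petersen graph GP(5,2), the maximum number of pairwise vertex-disjoint M-alternating cycles equals 1, and hence f(GP(5,2),M) > C(GP(5,2),M). -/

import Mathlib

open SimpleGraph

/-- The generalized Petersen graph `GP(n,k)`: vertices `u i = Sum.inl i`,
`v i = Sum.inr i`, edges `u i -- u (i+k)`, `u i -- v i`, `v i -- v (i+1)` (mod n). -/
def GP (n k : ℕ) : SimpleGraph (Fin n ⊕ Fin n) :=
  SimpleGraph.fromRel (fun a b =>
    match a, b with
    | Sum.inl i, Sum.inl j => (j : ℕ) = ((i : ℕ) + k) % n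
    | Sum.inl i, Sum.inr j => i = j
    | Sum.inr i, Sum.inr j => (j : ℕ) = ((i : ℕ) + 1) % n
    | _, _ => False)

/-- `S` is a forcing set of the perfect matching `M` of `G`:
`S` consists of edges of `M` and `M` is the unique perfect matching containing `S`. -/
def IsForcingSet {V : Type*} (G : SimpleGraph V) (M : G.Subgraph) (S : Set (Sym2 V)) : Prop :=
  S ⊆ M.edgeSet ∧
    ∀ M' : G.Subgraph, M'.IsPerfectMatching → S ⊆ M'.edgeSet → M' = M

/-- The forcing number `f(G,M)`: minimum cardinality of a forcing set of `M`. -/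
noncomputable def forcingNum {V : Type*} (G : SimpleGraph V) (M : G.Subgraph) : ℕ :=
  sInf {k | ∃ S : Set (Sym2 V), IsForcingSet G M S ∧ S.ncard = k}

/-- A cycle `p` of `G` is `M`-alternating: its edges lie alternately in `M` and outside `M`.
For a perfect matching `M` this is equivalent to saying that every vertex of the
cycle is covered by an edge of `M` lying on the cycle. -/
def IsAltCycle {V : Type*} (G : SimpleGraph V) (M : G.Subgraph) {v : V} (p : G.Walk v v) : Prop :=
  p.IsCycle ∧ ∀ u ∈ p.support, ∃ e ∈ p.edges, e ∈ M.edgeSet ∧ u ∈ e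

/-- `C(G,M)`: the maximum number of pairwise vertex-disjoint `M`-alternating cycles of `G`. -/
noncomputable def maxDisjAltCycles {V : Type*} (G : SimpleGraph V) (M : G.Subgraph) : ℕ :=
  sSup {k | ∃ c : Fin k → Σ v : V, G.Walk v v,
    (∀ i, IsAltCycle G M (c i).2) ∧
    Pairwise fun i j => List.Disjoint (c i).2.support (c j).2.support}


/-!
An `M`-alternating cycle contains, with each of its vertices, that vertex's `M`-partner, so
`M` restricts to a perfect matching of its vertex set and the cycle has even length. The Petersen
graph has no 4-cycles, so every alternating cycle has at least 6 of the 10 vertices and two of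
them cannot be disjoint. On the other hand, the Petersen graph has exactly six perfect matchings,
and `M ∆ M'` is an alternating 8-cycle for a suitable second matching `M'`; hence
`C(GP(5,2), M) = 1`. Finally, every edge of `M` lies in another perfect matching, so no set of at
most one edge forces `M`, and `f(GP(5,2), M) ≥ 2`.
-/

namespace SimpleGraph

variable {V : Type*} {G : SimpleGraph V}

theorem Walk.IsCycle.card_toFinset_support [DecidableEq V] {v : V} {p : G.Walk v v}
    (hp : p.IsCycle) : p.support.toFinset.card = p.length := by
  have htail : p.support.toFinset = p.support.tail.toFinset := by
    rw [← p.cons_tail_support, List.toFinset_cons, List.tail_cons,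
      Finset.insert_eq_of_mem (List.mem_toFinset.2 (p.end_mem_tail_support hp.not_nil))]
  rw [htail, List.toFinset_card_of_nodup hp.support_nodup, List.length_tail, p.length_support,
    Nat.add_sub_cancel]

theorem Walk.IsCycle.length_ne_four
    (hG : ∀ a b c d, G.Adj a b ∧ G.Adj b c ∧ G.Adj c d ∧ G.Adj d a → a = c ∨ b = d)
    {v : V} {p : G.Walk v v} (hp : p.IsCycle) : p.length ≠ 4 := by
  intro h4
  rcases p with _ | ⟨hab, _ | ⟨hbc, _ | ⟨hcd, _ | ⟨hda, _ | ⟨_, _⟩⟩⟩⟩⟩ <;>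
    simp only [Walk.length_cons, Walk.length_nil] at h4 <;> try omega
  have hnodup := hp.support_nodup
  simp only [Walk.support_cons, Walk.support_nil, List.tail_cons, List.nodup_cons,
    List.mem_cons, List.not_mem_nil, not_or] at hnodup
  obtain ⟨⟨-, hbd, -⟩, ⟨-, hcv, -⟩, -⟩ := hnodup
  rcases hG _ _ _ _ ⟨hab, hbc, hcd, hda⟩ with h | h
  · exact hcv h.symm
  · exact hbd h

theorem Subgraph.IsPerfectMatching.eq_of_edgeSet_subset {M M' : G.Subgraph}
    (hM : M.IsPerfectMatching) (hM' : M'.IsPerfectMatching) (h : M.edgeSet ⊆ M'.edgeSet) :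
    M = M' := by
  refine Subgraph.IsMatching.injOn_edgeSet hM.1 hM'.1 (h.antisymm fun e he => ?_)
  induction e using Sym2.ind with
  | h v w =>
    obtain ⟨u, hvu, -⟩ := hM.1 (hM.2 v)
    obtain rfl := hM'.1.eq_of_adj_left (Subgraph.mem_edgeSet.1 (h hvu)) he
    exact hvu

end SimpleGraph

open SimpleGraph

section AlternatingCycles

variable {V : Type*} {G : SimpleGraph V} {M : G.Subgraph} {v : V} {p : G.Walk v v}

theorem isAltCycle_of_partner {f : V → V} (hf : ∀ u, M.Adj u (f u)) (hp : p.IsCycle)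
    (h : ∀ u ∈ p.support, s(u, f u) ∈ p.edges) : IsAltCycle G M p :=
  ⟨hp, fun u hu => ⟨s(u, f u), h u hu, hf u, Sym2.mem_mk_left _ _⟩⟩

theorem IsAltCycle.exists_adj_mem_support (hp : IsAltCycle G M p) {u : V} (hu : u ∈ p.support) :
    ∃ w ∈ p.support, M.Adj u w := by
  obtain ⟨e, he, heM, hue⟩ := hp.2 u hu
  induction e using Sym2.ind with
  | h a b =>
    rcases Sym2.mem_iff.1 hue with rfl | rfl
    · exact ⟨b, p.snd_mem_support_of_mem_edges he, heM⟩
    · exact ⟨a, p.fst_mem_support_of_mem_edges he, (Subgraph.mem_edgeSet.1 heM).symm⟩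

theorem IsAltCycle.even_length (hM : M.IsMatching) (hp : IsAltCycle G M p) : Even p.length := by
  classical
  have hmatch : (M.induce (p.support.toFinset : Set V)).IsMatching := by
    intro u hu
    have hu : u ∈ p.support := List.mem_toFinset.1 hu
    obtain ⟨w, hw, huw⟩ := hp.exists_adj_mem_support hu
    exact ⟨w, ⟨List.mem_toFinset.2 hu, List.mem_toFinset.2 hw, huw⟩,
      fun y hy => hM.eq_of_adj_left hy.2.2 huw⟩
  let _ : Fintype (M.induce (p.support.toFinset : Set V)).verts := FinsetCoe.fintype _
  simpa only [Subgraph.induce_verts, Finset.toFinset_coe, hp.1.card_toFinset_support]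
    using hmatch.even_card

theorem maxDisjAltCycles_eq_one [Fintype V] {m : ℕ} (hV : Fintype.card V < 2 * m)
    (hlen : ∀ (v : V) (p : G.Walk v v), IsAltCycle G M p → m ≤ p.length)
    (hex : ∃ (v : V) (p : G.Walk v v), IsAltCycle G M p) : maxDisjAltCycles G M = 1 := by
  classical
  obtain ⟨v, p, hp⟩ := hex
  refine IsGreatest.csSup_eq
    ⟨⟨fun _ => ⟨v, p⟩, fun _ => hp, fun i j hij => absurd (Subsingleton.elim i j) hij⟩, ?_⟩
  rintro k ⟨c, hc, hdisj⟩
  by_contra! hk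
  have h01 : (⟨0, by omega⟩ : Fin k) ≠ ⟨1, hk⟩ := by simp [Fin.ext_iff]
  have hcard := (Finset.card_union_of_disjoint
    (List.disjoint_toFinset_iff_disjoint.2 (hdisj h01))).symm.trans_le (Finset.card_le_univ _)
  rw [(hc _).1.card_toFinset_support, (hc _).1.card_toFinset_support] at hcard
  have := hlen _ _ (hc ⟨0, by omega⟩)
  have := hlen _ _ (hc ⟨1, hk⟩)
  omega

end AlternatingCycles

section Forcing

variable {V : Type*} {G : SimpleGraph V} {M : G.Subgraph}

theorem isForcingSet_edgeSet (hM : M.IsPerfectMatching) : IsForcingSet G M M.edgeSet :=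
  ⟨subset_rfl, fun _ hM' h => (hM.eq_of_edgeSet_subset hM' h).symm⟩

theorem le_forcingNum {k : ℕ} (hM : M.IsPerfectMatching)
    (h : ∀ S ⊆ M.edgeSet, S.ncard < k →
      ∃ M' : G.Subgraph, M'.IsPerfectMatching ∧ S ⊆ M'.edgeSet ∧ M' ≠ M) :
    k ≤ forcingNum G M := by
  refine le_csInf ⟨_, M.edgeSet, isForcingSet_edgeSet hM, rfl⟩ ?_
  rintro _ ⟨S, ⟨hSM, hforce⟩, rfl⟩
  by_contra! hS
  obtain ⟨M', hM', hSM', hne⟩ := h S hSM hS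
  exact hne (hforce M' hM' hSM')

end Forcing

instance (n k : ℕ) : DecidableRel (GP n k).Adj
  | .inl i, .inl j => decidable_of_iff
      (Sum.inl i ≠ Sum.inl j ∧ ((j : ℕ) = (i + k) % n ∨ (i : ℕ) = (j + k) % n)) Iff.rfl
  | .inl i, .inr j => decidable_of_iff (Sum.inl i ≠ Sum.inr j ∧ (i = j ∨ False)) Iff.rfl
  | .inr i, .inl j => decidable_of_iff (Sum.inr i ≠ Sum.inl j ∧ (False ∨ j = i)) Iff.rfl
  | .inr i, .inr j => decidable_of_iff
      (Sum.inr i ≠ Sum.inr j ∧ ((j : ℕ) = (i + 1) % n ∨ (i : ℕ) = (j + 1) % n)) Iff.rfl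

namespace Petersen

open Sum

theorem adj_inl_iff (j : Fin 5) (w : Fin 5 ⊕ Fin 5) :
    (GP 5 2).Adj (inl j) w ↔ w = inl (j + 2) ∨ w = inl (j - 2) ∨ w = inr j := by
  revert j w; decide

theorem adj_inr_iff (j : Fin 5) (w : Fin 5 ⊕ Fin 5) :
    (GP 5 2).Adj (inr j) w ↔ w = inr (j + 1) ∨ w = inr (j - 1) ∨ w = inl j := by
  revert j w; decide

theorem four_cycle_degenerate (a b c d : Fin 5 ⊕ Fin 5) :
    (GP 5 2).Adj a b ∧ (GP 5 2).Adj b c ∧ (GP 5 2).Adj c d ∧ (GP 5 2).Adj d a →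
      a = c ∨ b = d := by
  revert a b c d; decide

/-- `partner none` matches along the five spokes `u j v j`; `partner (some i)` uses the spoke
`u i v i` only, together with the unique perfect matchings of the paths `v (i+1) … v (i+4)` and
`u (i+2) u (i+4) u (i+1) u (i+3)`. -/
def partner : Option (Fin 5) → Fin 5 ⊕ Fin 5 → Fin 5 ⊕ Fin 5
  | none, inl j => inr j
  | none, inr j => inl j
  | some i, inl j =>
    if j = i then inr j else if j - i = 1 ∨ j - i = 2 then inl (j + 2) else inl (j - 2)
  | some i, inr j =>
    if j = i then inl j else if j - i = 1 ∨ j - i = 3 then inr (j + 1) else inr (j - 1)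

theorem adj_partner (i : Option (Fin 5)) (a : Fin 5 ⊕ Fin 5) :
    (GP 5 2).Adj a (partner i a) := by
  revert i a; decide

theorem partner_partner (i : Option (Fin 5)) (a : Fin 5 ⊕ Fin 5) :
    partner i (partner i a) = a := by
  revert i a; decide

theorem partner_injective : Function.Injective partner := by decide

theorem exists_ne_partner_eq (i : Option (Fin 5)) (a : Fin 5 ⊕ Fin 5) :
    ∃ j ≠ i, partner j a = partner i a := by
  revert i a; decide

theorem eq_partner_of_adj_of_involutive (f : Fin 5 ⊕ Fin 5 → Fin 5 ⊕ Fin 5)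
    (hadj : ∀ v, (GP 5 2).Adj v (f v)) (hf : Function.Involutive f) : ∃ i, f = partner i := by
  have back : ∀ {v w}, f v = w → f w = v := fun h => h ▸ hf _
  have hl := fun j => (adj_inl_iff j _).1 (hadj (inl j))
  have hr := fun j => (adj_inr_iff j _).1 (hadj (inr j))
  clear hadj hf
  -- Choose the partner of each vertex in turn and discard the choices clashing with `back`;
  -- six assignments survive.
  all_goals rcases hl 0 with h | h | h <;> have := back h <;> try (clear back hl hr; grind)
  all_goals rcases hl 1 with h | h | h <;> have := back h <;> try (clear back hl hr; grind)
  all_goals rcases hl 2 with h | h | h <;> have := back h <;> try (clear back hl hr; grind)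
  all_goals rcases hl 3 with h | h | h <;> have := back h <;> try (clear back hl hr; grind)
  all_goals rcases hl 4 with h | h | h <;> have := back h <;> try (clear back hl hr; grind)
  all_goals rcases hr 0 with h | h | h <;> have := back h <;> try (clear back hl hr; grind)
  all_goals rcases hr 1 with h | h | h <;> have := back h <;> try (clear back hl hr; grind)
  all_goals rcases hr 2 with h | h | h <;> have := back h <;> try (clear back hl hr; grind)
  all_goals rcases hr 3 with h | h | h <;> have := back h <;> try (clear back hl hr; grind)
  all_goals rcases hr 4 with h | h | h <;> have := back h <;> try (clear back hl hr; grind)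
  all_goals first
    | (refine ⟨none, funext fun v => ?_⟩; rcases v with j | j <;> fin_cases j <;> assumption)
    | (refine ⟨some 0, funext fun v => ?_⟩; rcases v with j | j <;> fin_cases j <;> assumption)
    | (refine ⟨some 1, funext fun v => ?_⟩; rcases v with j | j <;> fin_cases j <;> assumption)
    | (refine ⟨some 2, funext fun v => ?_⟩; rcases v with j | j <;> fin_cases j <;> assumption)
    | (refine ⟨some 3, funext fun v => ?_⟩; rcases v with j | j <;> fin_cases j <;> assumption)
    | (refine ⟨some 4, funext fun v => ?_⟩; rcases v with j | j <;> fin_cases j <;> assumption)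

def matching (i : Option (Fin 5)) : (GP 5 2).Subgraph where
  verts := Set.univ
  Adj a b := b = partner i a
  adj_sub := by rintro a b rfl; exact adj_partner i a
  edge_vert _ := Set.mem_univ _
  symm := ⟨fun a b h => by rw [h, partner_partner]⟩

theorem isPerfectMatching_matching (i : Option (Fin 5)) : (matching i).IsPerfectMatching :=
  Subgraph.isPerfectMatching_iff.2 fun a => ⟨partner i a, rfl, fun _ h => h⟩

theorem matching_injective : Function.Injective matching := fun i j h =>
  partner_injective <| funext fun a => show (matching j).Adj a (partner i a) from h ▸ rfl

theorem eq_matching_of_isPerfectMatching {M : (GP 5 2).Subgraph} (hM : M.IsPerfectMatching) :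
    ∃ i, M = matching i := by
  choose f hf huniq using Subgraph.isPerfectMatching_iff.1 hM
  obtain ⟨i, rfl⟩ := eq_partner_of_adj_of_involutive f (fun v => M.adj_sub (hf v))
    fun v => (huniq _ _ (hf v).symm).symm
  refine ⟨i, Subgraph.ext hM.2.verts_eq_univ ?_⟩
  funext a b
  exact propext ⟨huniq a b, fun h => h ▸ hf a⟩

/-- The symmetric difference of `matching i` with `matching none` (for `some i`), resp. with
`matching (some 4)` (for `none`). -/
def altCycle : Option (Fin 5) → Σ v, (GP 5 2).Walk v v
  | none => ⟨_, .ofSupport [inl 0, inr 0, inr 1, inl 1, inl 3, inr 3, inr 2, inl 2, inl 0]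
      (List.cons_ne_nil _ _) (by decide)⟩
  | some i => ⟨_, .ofSupport [inl (i + 4), inr (i + 4), inr (i + 3), inl (i + 3), inl (i + 1),
      inr (i + 1), inr (i + 2), inl (i + 2), inl (i + 4)] (List.cons_ne_nil _ _)
      (by revert i; decide)⟩

theorem isAltCycle_altCycle (i : Option (Fin 5)) :
    IsAltCycle (GP 5 2) (matching i) (altCycle i).2 := by
  have key : ∀ i, (altCycle i).2.IsCycle ∧
      ∀ u ∈ (altCycle i).2.support, s(u, partner i u) ∈ (altCycle i).2.edges := by
    simp only [Walk.isCycle_iff_isPath_tail_and_le_length, Walk.isPath_def]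
    decide
  exact isAltCycle_of_partner (fun _ => rfl) (key i).1 (key i).2

theorem six_le_length_of_isAltCycle {M : (GP 5 2).Subgraph} (hM : M.IsMatching)
    {v : Fin 5 ⊕ Fin 5} {p : (GP 5 2).Walk v v} (hp : IsAltCycle (GP 5 2) M p) :
    6 ≤ p.length := by
  have h3 := hp.1.three_le_length
  have h4 := hp.1.length_ne_four four_cycle_degenerate
  obtain ⟨k, hk⟩ := hp.even_length hM
  omega

theorem two_le_forcingNum (i : Option (Fin 5)) : 2 ≤ forcingNum (GP 5 2) (matching i) := by
  refine le_forcingNum (isPerfectMatching_matching i) fun S hS hcard => ?_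
  obtain ⟨j, hj, hSj⟩ : ∃ j ≠ i, S ⊆ (matching j).edgeSet := by
    rcases (Set.ncard_le_one_iff_eq S.toFinite).1 (Nat.le_of_lt_succ hcard) with
      rfl | ⟨e, rfl⟩
    · obtain ⟨j, hj⟩ := exists_ne i
      exact ⟨j, hj, Set.empty_subset _⟩
    · induction e using Sym2.ind with
      | h a b =>
        obtain rfl : b = partner i a := hS rfl
        obtain ⟨j, hj, hja⟩ := exists_ne_partner_eq i a
        exact ⟨j, hj, Set.singleton_subset_iff.2 hja.symm⟩
  exact ⟨matching j, isPerfectMatching_matching j, hSj, matching_injective.ne hj⟩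

end Petersen

theorem stmt5 (M : (GP 5 2).Subgraph) (hM : M.IsPerfectMatching) :
    maxDisjAltCycles (GP 5 2) M = 1 ∧
    forcingNum (GP 5 2) M > maxDisjAltCycles (GP 5 2) M := by
  obtain ⟨i, rfl⟩ := Petersen.eq_matching_of_isPerfectMatching hM
  have hC : maxDisjAltCycles (GP 5 2) (Petersen.matching i) = 1 :=
    maxDisjAltCycles_eq_one (m := 6) (by simp)
      (fun _ _ hp => Petersen.six_le_length_of_isAltCycle hM.1 hp)
      ⟨_, _, Petersen.isAltCycle_altCycle i⟩
  exact ⟨hC, hC ▸ Petersen.two_le_forcingNum i⟩
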